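/- arXiv:2008.04424 — 5 statements merged into one kernel-verified Lean document; each statement's English description precedes it below -/
import Mathlib

section
/- In the state machine for (FIFO) work-stealing with weak multiplicity, the suffix invariant is preserved: if a state (t_0, ..., t_{n-1}) (an n-vector of finite strings over the naturals) satisfies that for any two components one is a suffix of the other, then every state reachable by a single transition (Put, Take, or Steal) also satisfies this property. -/
/-- Labels for the (FIFO) work-stealing with weak multiplicity state machine:
a `Put` of task `x`, an extraction (Take if `i = 0`, Steal otherwise) by
process `i` returning task `x`, or an extraction on an empty component
returning `empty`. -/
inductive WLab (n : ℕ) where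
  | put (x : ℕ) : WLab n
  | extract (i : Fin n) (x : ℕ) : WLab n
  | extractEmpty (i : Fin n) : WLab n

/-- Transition relation of the weak-multiplicity state machine.  States are
`n`-vectors of finite strings over ℕ (head of each string at the front).
`put x` appends `x` to every component.  An extraction by process `i` on
`t_i = x_1 ⋯ x_j · q`, where `x_j · q` is the shortest component (encoded by
`hshort`: some component `p` satisfies `k + |t_p| ≤ |t_i| + 1`, equivalently
`k ≤ j` for `j` determined by the minimum length), returns `x_k` for some
`1 ≤ k ≤ j` and replaces `t_i` by `x_{k+1} ⋯ x_j · q`. -/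
inductive WStep {n : ℕ} : (Fin n → List ℕ) → WLab n → (Fin n → List ℕ) → Prop
  | put (s : Fin n → List ℕ) (x : ℕ) :
      WStep s (.put x) (fun i => s i ++ [x])
  | extract (s : Fin n → List ℕ) (i : Fin n) (k x : ℕ)
      (hk1 : 1 ≤ k) (hk2 : k ≤ (s i).length)
      (hshort : ∃ p, k + (s p).length ≤ (s i).length + 1)
      (hx : (s i)[k - 1]? = some x) :
      WStep s (.extract i x) (Function.update s i ((s i).drop k))
  | extractEmpty (s : Fin n → List ℕ) (i : Fin n) (h : s i = []) :
      WStep s (.extractEmpty i) s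

/-- Finite executions of the weak-multiplicity machine from the all-empty
initial state, recording the trace of transitions and the resulting state. -/
inductive WExec {n : ℕ} : List (WLab n) → (Fin n → List ℕ) → Prop
  | nil : WExec [] (fun _ => [])
  | snoc {tr : List (WLab n)} {s : Fin n → List ℕ} {l : WLab n} {s' : Fin n → List ℕ} :
      WExec tr s → WStep s l s' → WExec (tr ++ [l]) s'

/-- The string of tasks inserted so far: the arguments of `put` transitions,
in order. -/
def winserted {n : ℕ} (tr : List (WLab n)) : List ℕ :=
  tr.filterMap fun l => match l with | .put x => some x | _ => none

def SuffixComparable {ι α : Type*} (s : ι → List α) : Prop :=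
  ∀ i j, s i <:+ s j ∨ s j <:+ s i

namespace SuffixComparable

variable {ι α : Type*} {s s' : ι → List α}

theorem append_right (h : SuffixComparable s) (t : List α) :
    SuffixComparable fun i => s i ++ t := fun i j =>
  (h i j).imp List.suffix_append_self_iff.mpr List.suffix_append_self_iff.mpr

theorem of_forall_suffix (h : SuffixComparable s) (hs : ∀ i, s' i <:+ s i) :
    SuffixComparable s' := fun i j =>
  (h i j).elim
    (fun hij => List.suffix_or_suffix_of_suffix ((hs i).trans hij) (hs j))
    (fun hji => List.suffix_or_suffix_of_suffix (hs i) ((hs j).trans hji))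

end SuffixComparable

theorem Function.update_suffix_self {ι α : Type*} [DecidableEq ι] {s : ι → List α} {p : ι}
    {t : List α} (ht : t <:+ s p) (a : ι) : Function.update s p t a <:+ s a := by
  rcases eq_or_ne a p with rfl | ha
  · simpa using ht
  · simp [Function.update_of_ne ha]

theorem WStep.suffixComparable {n : ℕ} {s s' : Fin n → List ℕ} {l : WLab n}
    (hstep : WStep s l s') (h : SuffixComparable s) : SuffixComparable s' := by
  cases hstep with
  | put x => exact h.append_right [x]
  | extract p k =>
    exact h.of_forall_suffix (Function.update_suffix_self (List.drop_suffix k (s p)))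
  | extractEmpty => exact h

/-- the suffix invariant (of any two components, one is a suffix
of the other) is preserved by every single transition of the weak-multiplicity
work-stealing state machine. -/
theorem weak_mult_suffix_invariant_preserved {n : ℕ}
    (s s' : Fin n → List ℕ) (l : WLab n)
    (hinv : ∀ i j : Fin n, s i <:+ s j ∨ s j <:+ s i)
    (hstep : WStep s l s') :
    ∀ i j : Fin n, s' i <:+ s' j ∨ s' j <:+ s' i :=
  hstep.suffixComparable hinv
end

section
/- In the state machine for (FIFO) work-stealing with weak multiplicity, starting from the all-empty state, after any finite sequence of transitions, each component t_i of the state is a suffix of the string of all tasks inserted so far (in insertion order). -/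
theorem winserted_append {n : ℕ} (tr tr' : List (WLab n)) :
    winserted (tr ++ tr') = winserted tr ++ winserted tr' :=
  List.filterMap_append

theorem WStep.suffix_append_winserted {n : ℕ} {s s' : Fin n → List ℕ} {l : WLab n}
    (h : WStep s l s') (i : Fin n) : s' i <:+ s i ++ winserted [l] := by
  cases h with
  | put => exact List.suffix_refl _
  | extract j k =>
    rcases eq_or_ne i j with rfl | hij
    · simpa [winserted] using List.drop_suffix k (s i)
    · simp [winserted, Function.update_of_ne hij]
  | extractEmpty j _ => simp [winserted]

/-- starting from the all-empty state, after any finite sequence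
of transitions each component of the state is a suffix of the string of all
tasks inserted so far (in insertion order). -/
theorem weak_mult_component_suffix_of_inserted {n : ℕ}
    (tr : List (WLab n)) (s : Fin n → List ℕ) (h : WExec tr s) :
    ∀ i : Fin n, s i <:+ winserted tr := by
  induction h with
  | nil => simp [winserted]
  | snoc _ hstep ih =>
    intro i
    rw [winserted_append]
    exact (hstep.suffix_append_winserted i).trans (List.suffix_append_self_iff.mpr (ih i))
end

section
/- In the RangeMaxRegister state machine, every value returned by an RMaxRead transition is either the initial value 1 or the argument of some earlier RMaxWrite transition in the execution. -/
/-- Labels for the RangeMaxRegister state machine: `write i x` is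
`RMaxWrite_i(x)` and `read i v` is an `RMaxRead_i` returning `v`. -/
inductive RLab (n : ℕ) where
  | write (i : Fin n) (x : ℕ) : RLab n
  | read (i : Fin n) (v : ℕ) : RLab n

/-- Transition relation of the RangeMaxRegister.  States are `n`-vectors of
naturals.  `RMaxWrite_i(x)` replaces `r_i` by `x` if `x > r_i` and otherwise
is a no-op (i.e. it replaces `r_i` by `max r_i x`).  `RMaxRead_i`
nondeterministically returns some `v` with `r_i ≤ v ≤ max (r_0, …, r_{n-1})`
(the upper bound encoded as `∃ j, v ≤ r_j`) and replaces `r_i` by `v`. -/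
inductive RStep {n : ℕ} : (Fin n → ℕ) → RLab n → (Fin n → ℕ) → Prop
  | write (s : Fin n → ℕ) (i : Fin n) (x : ℕ) :
      RStep s (.write i x) (Function.update s i (max (s i) x))
  | read (s : Fin n → ℕ) (i : Fin n) (v : ℕ)
      (h1 : s i ≤ v) (h2 : ∃ j, v ≤ s j) :
      RStep s (.read i v) (Function.update s i v)

/-- Finite sequences of RangeMaxRegister transitions from `s` to `s''`. -/
inductive RSteps {n : ℕ} : (Fin n → ℕ) → List (RLab n) → (Fin n → ℕ) → Prop
  | nil (s : Fin n → ℕ) : RSteps s [] s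
  | cons {s : Fin n → ℕ} {l : RLab n} {s' : Fin n → ℕ} {tr : List (RLab n)}
      {s'' : Fin n → ℕ} :
      RStep s l s' → RSteps s' tr s'' → RSteps s (l :: tr) s''

/-- Arguments of the RMaxWrite transitions of a trace, in order. -/
def rwrites {n : ℕ} (tr : List (RLab n)) : List ℕ :=
  tr.filterMap fun l => match l with | .write _ x => some x | _ => none

/-! Along an execution from `(1, …, 1)`, every component stays below the running maximum of 1
and the write arguments so far: a write raises this bound to cover its argument, and a read
stores a value that is below some component. A read's return value is below some component
of the state it is taken in, hence below the bound at that point. -/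

section

variable {n : ℕ}

lemma rwrites_cons (l : RLab n) (tr : List (RLab n)) :
    rwrites (l :: tr) = rwrites [l] ++ rwrites tr := by
  cases l <;> rfl

lemma RSteps.exists_of_append {s s'' : Fin n → ℕ} {tr₁ tr₂ : List (RLab n)}
    (h : RSteps s (tr₁ ++ tr₂) s'') : ∃ s', RSteps s tr₁ s' ∧ RSteps s' tr₂ s'' := by
  induction tr₁ generalizing s with
  | nil => exact ⟨s, .nil s, h⟩
  | cons l tr₁ ih =>
    obtain _ | ⟨hstep, hrest⟩ := h
    obtain ⟨s', h₁, h₂⟩ := ih hrest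
    exact ⟨s', .cons hstep h₁, h₂⟩

lemma RStep.le_of_read {s s' : Fin n → ℕ} {i : Fin n} {v M : ℕ}
    (h : RStep s (.read i v) s') (hs : ∀ j, s j ≤ M) : v ≤ M := by
  cases h with
  | read _ _ _ hv =>
    obtain ⟨j, hj⟩ := hv
    exact hj.trans (hs j)

lemma RStep.forall_le_foldl {s s' : Fin n → ℕ} {l : RLab n} {M : ℕ}
    (h : RStep s l s') (hs : ∀ j, s j ≤ M) : ∀ j, s' j ≤ (rwrites [l]).foldl max M := by
  intro j
  cases h with
  | write i x =>
    show Function.update s i (max (s i) x) j ≤ max M x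
    rw [Function.update_apply]
    split_ifs with hji
    · exact max_le_max (hji ▸ hs j) le_rfl
    · exact le_max_of_le_left (hs j)
  | read i v _ hv =>
    show Function.update s i v j ≤ M
    rw [Function.update_apply]
    split_ifs
    · obtain ⟨k, hk⟩ := hv
      exact hk.trans (hs k)
    · exact hs j

lemma RSteps.forall_le_foldl {s s' : Fin n → ℕ} {tr : List (RLab n)} {M : ℕ}
    (h : RSteps s tr s') (hs : ∀ j, s j ≤ M) : ∀ j, s' j ≤ (rwrites tr).foldl max M := by
  induction h generalizing M with
  | nil => exact hs
  | cons hstep _ ih =>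
    rw [rwrites_cons, List.foldl_append]
    exact ih (hstep.forall_le_foldl hs)

end

/-- every value returned by an RMaxRead transition in an
execution from the initial state `(1, …, 1)` is at most the maximum of the
initial value 1 and the arguments of the RMaxWrite transitions that occur
earlier in the execution. -/
theorem rangemax_read_bounded_by_earlier_writes {n : ℕ}
    (tr : List (RLab n)) (s : Fin n → ℕ)
    (h : RSteps (fun _ => 1) tr s)
    (a : ℕ) (i : Fin n) (v : ℕ)
    (ha : tr[a]? = some (.read i v)) :
    v ≤ (rwrites (tr.take a)).foldl max 1 := by
  obtain ⟨ha_lt, hread⟩ := List.getElem?_eq_some_iff.mp ha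
  rw [← List.take_append_drop a tr, List.drop_eq_getElem_cons ha_lt, hread] at h
  obtain ⟨s₁, hprefix, hsuffix⟩ := h.exists_of_append
  obtain _ | ⟨hstep, -⟩ := hsuffix
  exact hstep.le_of_read (hprefix.forall_le_foldl fun _ => le_rfl)
end

section
/- In the set-sequential state machine for (FIFO) work-stealing with multiplicity, if all inserted tasks are pairwise distinct, then each task is returned by at most n operations overall, and all operations returning the same task belong to the same concurrency class. -/
/-- Labels of the set-sequential state machine for (FIFO) work-stealing with
multiplicity, for `n` processes.  `put x` is a `Put(x)` by the owner;
`extract cls x` is a concurrency class of extraction operations (process `0`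
performing `Take`, every other process in `cls` performing `Steal`), all
returning task `x`; `emptyResp i` is a `Take`/`Steal` by process `i`
returning `empty`. -/
inductive MLab (n : ℕ) where
  | put (x : ℕ) : MLab n
  | extract (cls : Finset (Fin n)) (x : ℕ) : MLab n
  | emptyResp (i : Fin n) : MLab n

/-- Transitions: states are finite strings over ℕ (head at the front),
initial state the empty string.  `Put(x)` maps `q` to `q · x`.  An extraction
concurrency class (a nonempty set of processes, hence with at most one `Take`
and at most `n - 1` `Steal`s by distinct thieves) maps `x :: q` to `q`, all
its operations returning `x`.  `Take`/`Steal` on the empty string return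
`empty` and leave the state unchanged. -/
inductive MStep {n : ℕ} : List ℕ → MLab n → List ℕ → Prop
  | put (q : List ℕ) (x : ℕ) : MStep q (.put x) (q ++ [x])
  | extract (x : ℕ) (q : List ℕ) (cls : Finset (Fin n)) (hne : cls.Nonempty) :
      MStep (x :: q) (.extract cls x) q
  | emptyResp (i : Fin n) : MStep [] (.emptyResp i) []

/-- Finite executions from the initial empty state, recording the trace and
the resulting state. -/
inductive MExec {n : ℕ} : List (MLab n) → List ℕ → Prop
  | nil : MExec [] []
  | snoc {tr : List (MLab n)} {q : List ℕ} {l : MLab n} {q' : List ℕ} :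
      MExec tr q → MStep q l q' → MExec (tr ++ [l]) q'

/-- The insertion string: arguments of the `Put` transitions so far, in order. -/
def mInserted {n : ℕ} (tr : List (MLab n)) : List ℕ :=
  tr.filterMap fun l => match l with | .put x => some x | _ => none

/-- The tasks returned by the successive extraction concurrency classes
(one task per class), in order. -/
def mExtracted {n : ℕ} (tr : List (MLab n)) : List ℕ :=
  tr.filterMap fun l => match l with | .extract _ x => some x | _ => none

lemma mexec_inv {n : ℕ} {tr : List (MLab n)} {q : List ℕ} (h : MExec tr q) :
    mExtracted tr ++ q = mInserted tr := by
  induction h with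
  | nil => rfl
  | snoc h1 h2 ih =>
    cases h2 with
    | put q x =>
      simp only [mInserted, mExtracted, List.filterMap_append, List.filterMap] at *
      simp only [List.append_nil, ← List.append_assoc, ih]
    | extract x q cls hne =>
      simp only [mInserted, mExtracted, List.filterMap_append, List.filterMap] at *
      rw [List.append_assoc, ← ih]
      simp
    | emptyResp i =>
      simpa [mInserted, mExtracted, List.filterMap_append, List.filterMap] using ih

lemma countP_eq_count {n : ℕ} (tr : List (MLab n)) (x : ℕ) :
    (tr.countP fun l => match l with | .extract _ y => y == x | _ => false)
      = (mExtracted tr).count x := by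
  induction tr with
  | nil => rfl
  | cons l tl ih =>
    cases l <;> simp [mExtracted, List.countP_cons, List.count_cons, ih, mExtracted] at *

lemma sum_le_mul {n : ℕ} (tr : List (MLab n)) (x : ℕ) :
    (tr.map fun l =>
        match l with
        | .extract cls y => if y = x then cls.card else 0
        | _ => 0).sum ≤
      n * (tr.countP fun l => match l with | .extract _ y => y == x | _ => false) := by
  induction tr with
  | nil => simp
  | cons l tl ih =>
    cases l with
    | put y => simpa [List.countP_cons] using ih
    | emptyResp i => simpa [List.countP_cons] using ih
    | extract cls y =>
      simp only [List.map_cons, List.sum_cons, List.countP_cons]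
      by_cases hy : y = x
      · subst hy
        simp only [if_pos rfl, beq_self_eq_true, if_pos, Nat.mul_add, Nat.mul_one]
        have hc : cls.card ≤ n := by
          simpa using Finset.card_le_card (Finset.subset_univ cls)
        omega
      · simp only [if_neg hy]
        have : (y == x) = false := by simpa using hy
        simpa [this] using ih

/-- if all inserted tasks are pairwise distinct, then all
operations returning a given task `x` belong to the same concurrency class
(there is at most one extraction class returning `x`), and hence `x` is
returned by at most `n` operations overall. -/
theorem mult_task_returned_by_at_most_n_ops {n : ℕ}
    (tr : List (MLab n)) (q : List ℕ) (h : MExec tr q)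
    (hnd : (mInserted tr).Nodup) (x : ℕ) :
    (tr.countP fun l => match l with | .extract _ y => y == x | _ => false) ≤ 1 ∧
    (tr.map fun l =>
        match l with
        | .extract cls y => if y = x then cls.card else 0
        | _ => 0).sum ≤ n := by
  have hinv := mexec_inv h
  have hext : (mExtracted tr).Nodup := by
    rw [← hinv] at hnd
    exact (List.nodup_append.mp hnd).1
  have h1 : (tr.countP fun l => match l with | .extract _ y => y == x | _ => false) ≤ 1 := by
    rw [countP_eq_count]
    exact List.nodup_iff_count_le_one.mp hext x
  refine ⟨h1, ?_⟩
  calc _ ≤ n * (tr.countP fun l => match l with | .extract _ y => y == x | _ => false) :=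
        sum_le_mul tr x
    _ ≤ n * 1 := Nat.mul_le_mul_left n h1
    _ = n := Nat.mul_one n
end

section
/- In the idempotent FIFO work-stealing operational model, tasks can be extracted an unbounded number of times: for every positive integer z, there exists an interleaved execution with z Put operations of distinct tasks such that, for each i ∈ {0,...,z−1}, the i-th inserted task is returned by at least i+1 distinct extraction operations. -/
/-- Shared state of the idempotent FIFO work-stealing operational model:
an array `tasks`, shared integers `head` and `tail`, and the owner's local
saved copy of `head` (`some h` when the owner is in the middle of a `Take`,
between its read of `tasks[head]` and its write of `head`). -/
structure IState where
  tasks : ℕ → ℕ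
  head : ℕ
  tail : ℕ
  ownerLocal : Option ℕ

/-- Atomic events: `put x` (owner inserts `x`), `ownerRead x` (the owner's
first step of a `Take`: it reads `x = tasks[head]` and saves `head` locally),
`ownerWrite` (the owner's second step of a `Take`: it writes its locally
computed `head + 1`, overwriting any thief updates), and `steal x`
(a complete atomic `Steal` returning `x`). -/
inductive IEv where
  | put (x : ℕ) : IEv
  | ownerRead (x : ℕ) : IEv
  | ownerWrite : IEv
  | steal (x : ℕ) : IEv

/-- Interleaving semantics of the atomic steps. -/
inductive IStep : IState → IEv → IState → Prop
  | put (s : IState) (x : ℕ) :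
      IStep s (.put x) ⟨Function.update s.tasks s.tail x, s.head, s.tail + 1, s.ownerLocal⟩
  | ownerRead (s : IState) (hl : s.ownerLocal = none) (hne : s.head ≠ s.tail) :
      IStep s (.ownerRead (s.tasks s.head)) ⟨s.tasks, s.head, s.tail, some s.head⟩
  | ownerWrite (s : IState) (h : ℕ) (hl : s.ownerLocal = some h) :
      IStep s .ownerWrite ⟨s.tasks, h + 1, s.tail, none⟩
  | steal (s : IState) (hne : s.head ≠ s.tail) :
      IStep s (.steal (s.tasks s.head)) ⟨s.tasks, s.head + 1, s.tail, s.ownerLocal⟩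

/-- Executions from the initial state (`head = tail = 0`, owner idle). -/
inductive IExec : List IEv → IState → Prop
  | nil : IExec [] ⟨fun _ => 0, 0, 0, none⟩
  | snoc {tr : List IEv} {s : IState} {e : IEv} {s' : IState} :
      IExec tr s → IStep s e s' → IExec (tr ++ [e]) s'

/-- The tasks inserted by `Put` operations, in order. -/
def iPuts (tr : List IEv) : List ℕ :=
  tr.filterMap fun e => match e with | .put x => some x | _ => none

/-- Number of extraction operations (`Take`s, identified by their read step,
and `Steal`s) returning the task `v`. -/
def iRetCount (tr : List IEv) (v : ℕ) : ℕ :=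
  tr.countP fun e => match e with
    | .ownerRead x => x == v
    | .steal x => x == v
    | _ => false

/-!
An owner `Take` that has read task `k` can be overtaken by thieves stealing every task from `k`
up to the tail; its stale write then resets `head` to `k + 1`, making tasks `k + 1, …` available
again. After putting tasks `0, …, z - 1`, running such an interrupted `Take` for `k = 0, …, z - 1`
in turn steals task `i` once in each of the rounds `0, …, i`.
-/

inductive ISteps : IState → List IEv → IState → Prop
  | nil (s : IState) : ISteps s [] s
  | cons {s s' s'' : IState} {e : IEv} {tr : List IEv} :
      IStep s e s' → ISteps s' tr s'' → ISteps s (e :: tr) s''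

theorem ISteps.append {s s' s'' : IState} {tr tr' : List IEv}
    (h : ISteps s tr s') (h' : ISteps s' tr' s'') : ISteps s (tr ++ tr') s'' := by
  induction h with
  | nil => exact h'
  | cons hst _ ih => exact .cons hst (ih h')

theorem IExec.append_steps {tr tr' : List IEv} {s s' : IState}
    (h : IExec tr s) (h' : ISteps s tr' s') : IExec (tr ++ tr') s' := by
  induction h' generalizing tr with
  | nil => simpa using h
  | cons hst _ ih => simpa using ih (h.snoc hst)

theorem IExec.of_steps {tr : List IEv} {s : IState}
    (h : ISteps ⟨fun _ => 0, 0, 0, none⟩ tr s) : IExec tr s := by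
  simpa using IExec.nil.append_steps h

theorem iPuts_append (tr tr' : List IEv) : iPuts (tr ++ tr') = iPuts tr ++ iPuts tr' :=
  List.filterMap_append

theorem iPuts_map_put (l : List ℕ) : iPuts (l.map .put) = l := by
  simp [iPuts, List.filterMap_map]

theorem iRetCount_append (tr tr' : List IEv) (v : ℕ) :
    iRetCount (tr ++ tr') v = iRetCount tr v + iRetCount tr' v :=
  List.countP_append

theorem iRetCount_pos_of_steal_mem {tr : List IEv} {v : ℕ} (h : IEv.steal v ∈ tr) :
    0 < iRetCount tr v :=
  List.countP_pos_iff.mpr ⟨_, h, by simp⟩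

section Steps

variable (a : ℕ → ℕ)

theorem ISteps.puts_range (h n : ℕ) (o : Option ℕ) :
    ISteps ⟨a, h, 0, o⟩ ((List.range n).map .put)
      ⟨fun j => if j < n then j else a j, h, n, o⟩ := by
  induction n with
  | zero => simpa using ISteps.nil _
  | succ n ih =>
    rw [List.range_succ, List.map_append]
    refine ih.append (.cons ?_ (.nil _))
    convert IStep.put _ n using 2
    funext j
    simp only [Function.update_apply]
    split_ifs <;> omega

theorem ISteps.steals (h n : ℕ) (o : Option ℕ) :
    ISteps ⟨a, h, h + n, o⟩ ((List.range' h n).map fun j => .steal (a j))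
      ⟨a, h + n, h + n, o⟩ := by
  induction n generalizing h with
  | zero => exact .nil _
  | succ n ih =>
    rw [List.range'_succ, List.map_cons, show h + (n + 1) = h + 1 + n by omega]
    exact .cons (IStep.steal ⟨a, h, h + 1 + n, o⟩ (show h ≠ h + 1 + n by omega)) (ih (h + 1))

def interruptedTake (t k : ℕ) : List IEv :=
  .ownerRead (a k) :: ((List.range' k (t - k)).map fun j => .steal (a j)) ++ [.ownerWrite]

def interruptedTakes (t n : ℕ) : List IEv :=
  (List.range n).flatMap (interruptedTake a t)

theorem interruptedTakes_succ (t n : ℕ) :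
    interruptedTakes a t (n + 1) = interruptedTakes a t n ++ interruptedTake a t n := by
  simp [interruptedTakes, List.range_succ]

theorem ISteps.interruptedTake {t k : ℕ} (hk : k < t) :
    ISteps ⟨a, k, t, none⟩ (interruptedTake a t k) ⟨a, k + 1, t, none⟩ := by
  have hsteals := ISteps.steals a k (t - k) (some k)
  rw [Nat.add_sub_cancel' hk.le] at hsteals
  exact .cons (IStep.ownerRead ⟨a, k, t, none⟩ rfl hk.ne)
    (hsteals.append (.cons (IStep.ownerWrite _ k rfl) (.nil _)))

theorem ISteps.interruptedTakes {t n : ℕ} (hn : n ≤ t) :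
    ISteps ⟨a, 0, t, none⟩ (interruptedTakes a t n) ⟨a, n, t, none⟩ := by
  induction n with
  | zero => exact .nil _
  | succ n ih =>
    rw [interruptedTakes_succ]
    exact (ih (by omega)).append (.interruptedTake a (by omega))

theorem iPuts_interruptedTakes (t n : ℕ) : iPuts (interruptedTakes a t n) = [] := by
  simp [iPuts, interruptedTakes, interruptedTake, List.filterMap_flatMap, List.filterMap_map]

theorem le_iRetCount_interruptedTakes {t i : ℕ} (hi : i < t) (n : ℕ) :
    min n (i + 1) ≤ iRetCount (interruptedTakes a t n) (a i) := by
  induction n with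
  | zero => simp
  | succ n ih =>
    rw [interruptedTakes_succ, iRetCount_append]
    rcases Nat.lt_or_ge i n with hin | hni
    · omega
    · have hsteal : IEv.steal (a i) ∈ interruptedTake a t n :=
        List.mem_cons_of_mem _ (List.mem_append_left _
          (List.mem_map_of_mem (List.mem_range'_1.mpr ⟨hni, by omega⟩)))
      have := iRetCount_pos_of_steal_mem hsteal
      omega

end Steps

theorem idempotent_fifo_unbounded_extraction_general (z : ℕ) :
    ∃ (tr : List IEv) (s : IState), IExec tr s ∧
      (iPuts tr).length = z ∧ (iPuts tr).Nodup ∧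
      ∀ i < z, i + 1 ≤ iRetCount tr ((iPuts tr).getD i 0) := by
  let a : ℕ → ℕ := fun j => if j < z then j else 0
  refine ⟨(List.range z).map .put ++ interruptedTakes a z z, ⟨a, z, z, none⟩,
    .of_steps ((ISteps.puts_range _ 0 z none).append (.interruptedTakes a le_rfl)), ?_⟩
  rw [iPuts_append, iPuts_map_put, iPuts_interruptedTakes, List.append_nil]
  refine ⟨List.length_range, List.nodup_range, fun i hi => ?_⟩
  have hget : (List.range z).getD i 0 = a i := by simp [a, hi]
  rw [hget, iRetCount_append]
  have := le_iRetCount_interruptedTakes a hi z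
  omega

/-- in the idempotent FIFO work-stealing operational model,
tasks can be extracted an unbounded number of times: for every `z > 0` there
is an execution with `z` `Put` operations of pairwise distinct tasks in which,
for every `i < z`, the `i`-th inserted task is returned by at least `i + 1`
distinct extraction operations. -/
theorem idempotent_fifo_unbounded_extraction (z : ℕ) (hz : 0 < z) :
    ∃ (tr : List IEv) (s : IState), IExec tr s ∧
      (iPuts tr).length = z ∧ (iPuts tr).Nodup ∧
      ∀ i < z, i + 1 ≤ iRetCount tr ((iPuts tr).getD i 0) :=
  idempotent_fifo_unbounded_extraction_general z
end
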